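/- Let A_1,…,A_n be finite multisets and A = A_1 ∪ ⋯ ∪ A_n their indexed multiset union. Let T be a reduced tree with leaves in A which is mixing for this division. Then: (1) every gap-free colouring of T is weakly-mixing, i.e. C_T equals the set of all gap-free colourings of T; and (2) if T has height at least 2 and T_1,…,T_r are the subtrees obtained by deleting the root of T, then for every c ∈ C_T and every i ∈ {1,…,r}, the i-th projection p_i(c) is a gap-free weakly-mixing colouring of T_i, i.e. p_i(c) ∈ C_{T_i}. -/

import Mathlib

open Finset

/-! ### Algebras with two multiplications -/

/-- An algebra with two multiplications: an `R`-module `A` equipped with two `R`-bilinear,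
commutative, associative multiplications `dot` and `star` sharing a common unit `one`. -/
structure TwoMulAlg (R : Type*) (A : Type*) [CommRing R] [AddCommGroup A] [Module R A] where
  dot : A → A → A
  star : A → A → A
  one : A
  dot_comm : ∀ x y, dot x y = dot y x
  dot_assoc : ∀ x y z, dot (dot x y) z = dot x (dot y z)
  star_comm : ∀ x y, star x y = star y x
  star_assoc : ∀ x y z, star (star x y) z = star x (star y z)
  dot_one : ∀ x, dot x one = x
  star_one : ∀ x, star x one = x
  dot_add : ∀ x y z, dot (x + y) z = dot x z + dot y z
  star_add : ∀ x y z, star (x + y) z = star x z + star y z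
  dot_smul : ∀ (r : R) (x y : A), dot (r • x) y = r • dot x y
  star_smul : ∀ (r : R) (x y : A), star (r • x) y = r • star x y

namespace TwoMulAlg

variable {R : Type*} {A : Type*} [CommRing R] [AddCommGroup A] [Module R A]

/-- The `·`-product of the values of `f` over a finite set `s`. -/
def dotProd (T : TwoMulAlg R A) {ι : Type*} (s : Finset ι) (f : ι → A) : A :=
  @Finset.fold ι A T.dot ⟨T.dot_comm⟩ ⟨T.dot_assoc⟩ T.one f s

/-- The `∗`-product of the values of `f` over a finite set `s`. -/
def starProd (T : TwoMulAlg R A) {ι : Type*} (s : Finset ι) (f : ι → A) : A :=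
  @Finset.fold ι A T.star ⟨T.star_comm⟩ ⟨T.star_assoc⟩ T.one f s

/-- The same algebra with the roles of the two multiplications exchanged. -/
def swap (T : TwoMulAlg R A) : TwoMulAlg R A :=
  ⟨T.star, T.dot, T.one, T.star_comm, T.star_assoc, T.dot_comm, T.dot_assoc,
    T.star_one, T.dot_one, T.star_add, T.dot_add, T.star_smul, T.dot_smul⟩

end TwoMulAlg

/-- `k : Multiset A → A` is *the* family of cumulants of the identity map
`(A, ·) → (A, ∗)`: it is symmetric (being defined on multisets), satisfies `κ(a) = a`,
and the moment–cumulant formula: for every finite family `a : Fin m → A`, the `∗`-product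
of the family equals the sum, over all set partitions `ν` of `{1, …, m}`, of the
`·`-product over the blocks `b` of `ν` of the cumulants of the subfamilies. -/
def IsCumulant {R : Type*} {A : Type*} [CommRing R] [AddCommGroup A] [Module R A]
    (T : TwoMulAlg R A) (k : Multiset A → A) : Prop :=
  (∀ a : A, k {a} = a) ∧
  ∀ (m : ℕ) (a : Fin m → A),
    T.starProd Finset.univ a =
      ∑ᶠ ν : Finpartition (Finset.univ : Finset (Fin m)),
        T.dotProd ν.parts fun b => k (Multiset.map a b.val)

section Forests

variable {ι : Type*} [DecidableEq ι]

/-!  A reduced forest with set of leaves a finite (ground) set `b` is encoded by the family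
`F` of the sets of leaves lying below its internal vertices: this family is *laminar*
(any two members are nested or disjoint) and each member has at least two elements
(this corresponds to every internal vertex having at least two children).  The vertices of
the forest are identified with the corresponding sets of leaves: the singletons `{x}`, `x ∈ b`,
are the leaves and the members of `F` are the internal vertices. -/

/-- The vertices of the reduced forest `F` on the ground set `b`, viewed as subsets of `b`:
the singletons (leaves) together with the members of `F` (internal vertices). -/
def forestVerts (b : Finset ι) (F : Finset (Finset ι)) : Finset (Finset ι) :=
  F ∪ b.image fun x => ({x} : Finset ι)

/-- `F` encodes a reduced forest with leaves (bijectively labelled by) `b`: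
each internal vertex covers at least two leaves, i.e. has at least two children. -/
def IsReducedForest (b : Finset ι) (F : Finset (Finset ι)) : Prop :=
  (∀ s ∈ F, s ⊆ b ∧ 2 ≤ s.card) ∧
    ∀ s ∈ F, ∀ t ∈ F, s ⊆ t ∨ t ⊆ s ∨ Disjoint s t

/-- `t` is a child of `s` in the forest `F` on ground set `b`. -/
def IsChildV (b : Finset ι) (F : Finset (Finset ι)) (t s : Finset ι) : Prop :=
  t ∈ forestVerts b F ∧ s ∈ forestVerts b F ∧ t ⊂ s ∧
    ∀ u ∈ forestVerts b F, ¬(t ⊂ u ∧ u ⊂ s)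

/-- The children of the vertex `s` in the forest `F` on ground set `b`. -/
def childrenF (b : Finset ι) (F : Finset (Finset ι)) (s : Finset ι) : Finset (Finset ι) :=
  (forestVerts b F).filter fun t => t ⊂ s ∧ ∀ u ∈ forestVerts b F, ¬(t ⊂ u ∧ u ⊂ s)

/-- The roots (maximal vertices) of the forest `F` on ground set `b`. -/
def rootsF (b : Finset ι) (F : Finset (Finset ι)) : Finset (Finset ι) :=
  (forestVerts b F).filter fun s => ∀ u ∈ forestVerts b F, ¬s ⊂ u

/-- The forest `F` consists of a single tree. -/
def IsTreeF (b : Finset ι) (F : Finset (Finset ι)) : Prop :=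
  b ∈ forestVerts b F

/-- The number of internal vertices of the forest `F`. -/
def wForest (F : Finset (Finset ι)) : ℕ := F.card

/-- The height of the forest `F` on ground set `b` (the maximal distance from a root
to a leaf below it). -/
def forestHeight (b : Finset ι) (F : Finset (Finset ι)) : ℕ :=
  b.sup fun x => (F.filter fun s => x ∈ s).card

variable {A : Type*}

/-- The cumulant `κ_v` attached to a vertex `v` of the forest `F` (with leaves `b`
labelled by `a`): it is `a x` on a leaf `{x}` and `k` applied to the cumulants of the
children on an internal vertex. -/
noncomputable def kappaVert (k : Multiset A → A) (b : Finset ι) (F : Finset (Finset ι))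
    (a : ι → A) : Finset ι → A := fun s =>
  if h : s.card = 1 then a (Finset.card_eq_one.mp h).choose
  else k (Multiset.map (fun t => kappaVert k b F a t.1) (childrenF b F s).attach.val)
termination_by s => s.card
decreasing_by
  have ht := (Finset.mem_filter.mp t.2).2.1
  exact Finset.card_lt_card ht

end Forests

/-- The cumulant `κ_F` of the forest `F`: the `∗`-product of the cumulants of its roots. -/
noncomputable def kappaForest {R : Type*} {A : Type*} [CommRing R] [AddCommGroup A]
    [Module R A] {ι : Type*} [DecidableEq ι] (T : TwoMulAlg R A) (k : Multiset A → A)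
    (b : Finset ι) (F : Finset (Finset ι)) (a : ι → A) : A :=
  T.starProd (rootsF b F) (kappaVert k b F a)

section Mixing

variable {ι : Type*} [DecidableEq ι] {n : ℕ}

/-- The forest `F` is *mixing* for the division of its leaves given by `part`:
every internal vertex all of whose children are leaves has two children (leaves)
belonging to distinct multisets. -/
def IsMixingForest (b : Finset ι) (F : Finset (Finset ι)) (part : ι → Fin n) : Prop :=
  ∀ s ∈ F, (∀ t ∈ F, ¬t ⊂ s) → ∃ x ∈ s, ∃ y ∈ s, part x ≠ part y

/-- `lam` determines a *row partition* `{lam, b \ lam}` of the ground set `b` for the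
division given by `part`: both parts are nonempty and every fiber of `part` (i.e. every
multiset `A_i`) is contained in one of the two parts. -/
def IsRowSplit (b : Finset ι) (part : ι → Fin n) (lam : Finset ι) : Prop :=
  lam ⊆ b ∧ lam.Nonempty ∧ (b \ lam).Nonempty ∧
    ∀ i : Fin n, (b.filter fun x => part x = i) ⊆ lam ∨
      (b.filter fun x => part x = i) ⊆ b \ lam

/-- A set partition `ν` of `b` is *mixing* if some block is contained in no single
multiset `A_i`. -/
def IsMixingPartition (b : Finset ι) (ν : Finpartition b) (part : ι → Fin n) : Prop :=
  ∃ c ∈ ν.parts, ∀ i : Fin n, ¬c ⊆ b.filter fun x => part x = i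

/-- A set partition `ν` of `b` is *strongly mixing* if there is no row partition such that
every block of `ν` is contained in one of the two rows. -/
def IsStronglyMixingPartition (b : Finset ι) (ν : Finpartition b) (part : ι → Fin n) : Prop :=
  ¬∃ lam : Finset ι, IsRowSplit b part lam ∧
    ∀ c ∈ ν.parts, c ⊆ lam ∨ c ⊆ b \ lam

/-- A forest is *strongly mixing* if it is mixing and the partition of the leaves into the
leaf sets of its trees (i.e. of its roots) is strongly mixing. -/
def IsStronglyMixingForest (b : Finset ι) (F : Finset (Finset ι)) (part : ι → Fin n) : Prop :=
  IsMixingForest b F part ∧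
    ¬∃ lam : Finset ι, IsRowSplit b part lam ∧
      ∀ s ∈ rootsF b F, s ⊆ lam ∨ s ⊆ b \ lam

/-- `c` is a gap-free vertex colouring of length `r` of the forest `F` on ground set `b`:
each vertex gets a colour in `{0, …, r}`, each colour is used, each leaf is coloured `0`
and the colours strictly increase on any path from a leaf to a root.  (As a normalisation,
non-vertices get the colour `0`.) -/
def IsGapFreeColouring (b : Finset ι) (F : Finset (Finset ι)) (c : Finset ι → ℕ) (r : ℕ) :
    Prop :=
  (∀ s ∈ forestVerts b F, c s ≤ r) ∧
  (∀ j ≤ r, ∃ s ∈ forestVerts b F, c s = j) ∧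
  (∀ x ∈ b, c {x} = 0) ∧
  (∀ t s : Finset ι, IsChildV b F t s → c t < c s) ∧
  (∀ s : Finset ι, s ∉ forestVerts b F → c s = 0)

/-- A colouring is *weakly mixing* if either the colour `1` is not used at all, or some
vertex of colour `1` has two children which are leaves belonging to distinct multisets. -/
def IsWeaklyMixing (b : Finset ι) (F : Finset (Finset ι)) (part : ι → Fin n)
    (c : Finset ι → ℕ) : Prop :=
  (∀ s ∈ forestVerts b F, c s ≠ 1) ∨
    ∃ s ∈ forestVerts b F, c s = 1 ∧
      ∃ x y : ι, IsChildV b F {x} s ∧ IsChildV b F {y} s ∧ part x ≠ part y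

/-- The set `C_F` of gap-free, weakly mixing colourings of the forest `F` (a colouring is
recorded as a pair: the colour function together with its length). -/
def ColouringSet (b : Finset ι) (F : Finset (Finset ι)) (part : ι → Fin n) :
    Set ((Finset ι → ℕ) × ℕ) :=
  {p | IsGapFreeColouring b F p.1 p.2 ∧ IsWeaklyMixing b F part p.1}

/-- The signed count `Σ_{c ∈ C_F} (-1)^{|c|}` of the gap-free weakly mixing colourings
of the forest `F`. -/
noncomputable def colourSum (b : Finset ι) (F : Finset (Finset ι)) (part : ι → Fin n) : ℤ :=
  ∑ᶠ p ∈ ColouringSet b F part, (-1 : ℤ) ^ p.2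

/-- The projection of a colouring `c` onto the subtree of `F` with ground set `b`:
restrict `c` to the vertices and relabel the used colours order-preservingly by
`0, 1, 2, …`. -/
def projColouring (b : Finset ι) (F : Finset (Finset ι)) (c : Finset ι → ℕ) :
    (Finset ι → ℕ) × ℕ :=
  ((fun s => if s ∈ forestVerts b F then
      (((forestVerts b F).image c).sort (· ≤ ·)).idxOf (c s) else 0),
    ((forestVerts b F).image c).card - 1)

end Mixing

section UpSeq

variable {ι : Type*} [DecidableEq ι] {b : Finset ι} {A : Type*} {n : ℕ}

/-- The value attached to a block `c` of the top partition of an upward sequence of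
partitions; the list records the earlier (finer) partitions, from the latest to the
earliest.  On the empty list (a block of the first partition) it is the cumulant of the
labels of the elements of the block; on `p :: rest` it is the cumulant of the values of
the blocks of `p` contained in `c`. -/
def levelVal (k : Multiset A → A) (a : ι → A) : List (Finpartition b) → Finset ι → A
  | [], c => k (Multiset.map a c.val)
  | p :: rest, c => k (Multiset.map (levelVal k a rest) (p.parts.filter fun d => d ⊆ c).val)

/-- The cumulant `κ_ω` of a (nonempty) upward sequence of partitions
`ω = [ν¹, …, νʳ]`: the `∗`-product over the blocks of `νʳ` of the iterated cumulants. -/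
def kappaUpSeq {R : Type*} [CommRing R] [AddCommGroup A] [Module R A] (T : TwoMulAlg R A)
    (k : Multiset A → A) (a : ι → A) (ω : List (Finpartition b)) : A :=
  match ω.reverse with
  | [] => T.one
  | p :: rest => T.starProd p.parts (levelVal k a rest)

/-- The set `P↗(A)` of nested upward sequences of partitions starting from a mixing
partition.  An upward sequence is encoded by the induced chain `ν¹ ≤ ν² ≤ ⋯` of
partitions of the ground set `b` (`≤` being the refinement order); nestedness means the
chain is strictly increasing. -/
def UpSeqSet (b : Finset ι) (part : ι → Fin n) : Set (List (Finpartition b)) :=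
  {ω | ω ≠ [] ∧ List.Chain' (· < ·) ω ∧ ∀ p ∈ ω.head?, IsMixingPartition b p part}

end UpSeq

section AuxProofs

variable {ι : Type*} [DecidableEq ι] {n : ℕ}

lemma singleton_mem_forestVerts {b : Finset ι} {F : Finset (Finset ι)} {x : ι} (hx : x ∈ b) :
    ({x} : Finset ι) ∈ forestVerts b F :=
  Finset.mem_union_right _ (Finset.mem_image_of_mem _ hx)

lemma exists_child_between {b : Finset ι} {F : Finset (Finset ι)} {t s : Finset ι}
    (ht : t ∈ forestVerts b F) (hs : s ∈ forestVerts b F) (hts : t ⊂ s) :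
    ∃ u, IsChildV b F u s ∧ t ⊆ u := by
  set S := (forestVerts b F).filter (fun u => t ⊆ u ∧ u ⊂ s) with hS
  have hne : S.Nonempty := ⟨t, Finset.mem_filter.mpr ⟨ht, le_refl t, hts⟩⟩
  obtain ⟨m, hm, hmax⟩ := S.exists_maximal hne
  rw [hS, Finset.mem_filter] at hm
  refine ⟨m, ⟨hm.1, hs, hm.2.2, ?_⟩, hm.2.1⟩
  rintro u hu ⟨h1, h2⟩
  exact h1.2 (hmax (Finset.mem_filter.mpr ⟨hu, hm.2.1.trans h1.subset, h2⟩) h1.subset)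

lemma internal_colour_pos {b : Finset ι} {F : Finset (Finset ι)} {c : Finset ι → ℕ} {r : ℕ}
    (hred : IsReducedForest b F) (hc : IsGapFreeColouring b F c r) {s : Finset ι}
    (hsF : s ∈ F) : 1 ≤ c s := by
  obtain ⟨hsb, hcard⟩ := hred.1 s hsF
  obtain ⟨x, hx⟩ : s.Nonempty := Finset.card_pos.mp (by omega)
  have hxs : ({x} : Finset ι) ⊂ s := by
    rw [Finset.ssubset_iff_subset_ne]
    refine ⟨Finset.singleton_subset_iff.mpr hx, fun h => ?_⟩
    rw [← h, Finset.card_singleton] at hcard; omega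
  have hsv : s ∈ forestVerts b F := Finset.mem_union_left _ hsF
  obtain ⟨u, hu, -⟩ := exists_child_between (singleton_mem_forestVerts (hsb hx)) hsv hxs
  have := hc.2.2.2.1 u s hu
  omega

lemma gapfree_weaklyMixing (part : ι → Fin n) (b : Finset ι) (F : Finset (Finset ι))
    (hred : IsReducedForest b F) (hmix : IsMixingForest b F part)
    (c : Finset ι → ℕ) (r : ℕ) (hc : IsGapFreeColouring b F c r) :
    IsWeaklyMixing b F part c := by
  by_cases h1 : ∃ s ∈ forestVerts b F, c s = 1
  swap
  · exact Or.inl fun s hs hcs => h1 ⟨s, hs, hcs⟩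
  obtain ⟨s, hsv, hcs⟩ := h1
  have hsF : s ∈ F := by
    rcases Finset.mem_union.mp hsv with h | h
    · exact h
    · obtain ⟨x, hxb, rfl⟩ := Finset.mem_image.mp h
      rw [hc.2.2.1 x hxb] at hcs; omega
  obtain ⟨hsb, hcard⟩ := hred.1 s hsF
  have hchild : ∀ z ∈ s, IsChildV b F {z} s := by
    intro z hz
    have hzs : ({z} : Finset ι) ⊂ s := by
      rw [Finset.ssubset_iff_subset_ne]
      refine ⟨Finset.singleton_subset_iff.mpr hz, fun h => ?_⟩
      rw [← h, Finset.card_singleton] at hcard; omega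
    obtain ⟨u, hu, hsub⟩ := exists_child_between (singleton_mem_forestVerts (hsb hz))
      (Finset.mem_union_left _ hsF) hzs
    have hcu : c u < 1 := by have := hc.2.2.2.1 u s hu; omega
    rcases Finset.mem_union.mp hu.1 with h | h
    · have := internal_colour_pos hred hc h; omega
    · obtain ⟨x, hxb, rfl⟩ := Finset.mem_image.mp h
      have hzx : z = x := Finset.mem_singleton.mp (Finset.singleton_subset_iff.mp hsub)
      rwa [hzx]
  have hmin : ∀ t ∈ F, ¬t ⊂ s := by
    intro t htF hts
    obtain ⟨u, hu, hsub⟩ := exists_child_between (Finset.mem_union_left _ htF)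
      (Finset.mem_union_left _ hsF) hts
    have hcu : c u < 1 := by have := hc.2.2.2.1 u s hu; omega
    rcases Finset.mem_union.mp hu.1 with h | h
    · have := internal_colour_pos hred hc h; omega
    · obtain ⟨x, hxb, rfl⟩ := Finset.mem_image.mp h
      have h2 := (hred.1 t htF).2
      have h3 := Finset.card_le_card hsub
      rw [Finset.card_singleton] at h3; omega
  obtain ⟨x, hx, y, hy, hxy⟩ := hmix s hsF hmin
  exact Or.inr ⟨s, hsv, hcs, x, y, hchild x hx, hchild y hy, hxy⟩

lemma indexOf_lt_indexOf_of_sorted {L : List ℕ} (hs : L.Pairwise (· ≤ ·)) (hn : L.Nodup)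
    {a b : ℕ} (ha : a ∈ L) (hb : b ∈ L) (hab : a < b) :
    L.idxOf a < L.idxOf b := by
  by_contra h
  push_neg at h
  have hia : L.idxOf a < L.length := List.idxOf_lt_length_iff.mpr ha
  have hib : L.idxOf b < L.length := List.idxOf_lt_length_iff.mpr hb
  rcases lt_or_eq_of_le h with h' | h'
  · have hrel := hs.rel_get_of_lt (a := ⟨_, hib⟩) (b := ⟨_, hia⟩) h'
    rw [List.idxOf_get, List.idxOf_get] at hrel
    omega
  · have h1 := List.idxOf_get (a := a) (l := L) hia
    have h2 := List.idxOf_get (a := b) (l := L) hib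
    have : a = b := by rw [← h1, ← h2]; congr 1; exact Fin.ext h'.symm
    omega

end AuxProofs

section Statements

variable {R : Type*} {A : Type*} [CommRing R] [AddCommGroup A] [Module R A]
variable {ι : Type*} [Fintype ι] [DecidableEq ι] {n : ℕ}

theorem stmt14 {ι : Type*} [Fintype ι] [DecidableEq ι] {n : ℕ} (part : ι → Fin n)
    (F : Finset (Finset ι)) (hred : IsReducedForest Finset.univ F)
    (htree : IsTreeF Finset.univ F) (hmix : IsMixingForest Finset.univ F part) :
    (∀ (c : Finset ι → ℕ) (r : ℕ), IsGapFreeColouring Finset.univ F c r →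
        IsWeaklyMixing Finset.univ F part c) ∧
    (2 ≤ forestHeight Finset.univ F →
      ∀ p ∈ ColouringSet Finset.univ F part,
        ∀ s ∈ rootsF Finset.univ (F.erase Finset.univ),
          projColouring s (F.filter fun t => t ⊆ s) p.1 ∈
            ColouringSet s (F.filter fun t => t ⊆ s) part) := by
  constructor
  · intro c r hc
    exact gapfree_weaklyMixing part Finset.univ F hred hmix c r hc
  · intro _ p hp s hs
    obtain ⟨hgf, -⟩ := hp
    set c := p.1 with hcdef
    set F' := F.filter (fun t => t ⊆ s) with hF'
    -- basic facts about the subtree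
    have hV' : forestVerts s F' ⊆ forestVerts Finset.univ F := by
      intro t ht
      rcases Finset.mem_union.mp ht with h | h
      · exact Finset.mem_union_left _ (Finset.mem_filter.mp h).1
      · obtain ⟨x, -, rfl⟩ := Finset.mem_image.mp h
        exact singleton_mem_forestVerts (Finset.mem_univ x)
    have hred' : IsReducedForest s F' := by
      constructor
      · intro t ht
        exact ⟨(Finset.mem_filter.mp ht).2, (hred.1 t (Finset.mem_filter.mp ht).1).2⟩
      · intro t ht u hu
        exact hred.2 t (Finset.mem_filter.mp ht).1 u (Finset.mem_filter.mp hu).1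
    have hmix' : IsMixingForest s F' part := by
      intro u hu hminu
      refine hmix u (Finset.mem_filter.mp hu).1 fun t htF hts => ?_
      exact hminu t (Finset.mem_filter.mpr
        ⟨htF, hts.subset.trans (Finset.mem_filter.mp hu).2⟩) hts
    have hsne : s.Nonempty := by
      have hsv : s ∈ forestVerts Finset.univ (F.erase Finset.univ) := by
        have := hs
        simp only [rootsF, Finset.mem_filter] at this
        exact this.1
      rcases Finset.mem_union.mp hsv with h | h
      · have := (hred.1 s (Finset.erase_subset _ _ h)).2
        exact Finset.card_pos.mp (by omega)
      · obtain ⟨x, -, rfl⟩ := Finset.mem_image.mp h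
        exact ⟨x, Finset.mem_singleton_self x⟩
    -- the sorted list of used colours
    set M := (forestVerts s F').image c with hM
    set L := M.sort (· ≤ ·) with hL
    have hLs : L.Pairwise (· ≤ ·) := Finset.pairwise_sort _ _
    have hLn : L.Nodup := Finset.sort_nodup _ _
    have hmemL : ∀ a : ℕ, a ∈ L ↔ a ∈ M := fun a => Finset.mem_sort _
    have hlenL : L.length = M.card := Finset.length_sort _
    have hmemM : ∀ t ∈ forestVerts s F', c t ∈ M := fun t ht =>
      Finset.mem_image_of_mem c ht
    obtain ⟨x0, hx0⟩ := hsne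
    have hx0v : ({x0} : Finset ι) ∈ forestVerts s F' := singleton_mem_forestVerts hx0
    have hcx0 : c {x0} = 0 := hgf.2.2.1 x0 (Finset.mem_univ x0)
    have h0M : (0 : ℕ) ∈ M := hcx0 ▸ hmemM _ hx0v
    have h0L : (0 : ℕ) ∈ L := (hmemL 0).mpr h0M
    have hlenpos : 0 < L.length := List.length_pos_iff.mpr (List.ne_nil_of_mem h0L)
    have hidx0 : L.idxOf 0 = 0 := by
      have hi : L.idxOf 0 < L.length := List.idxOf_lt_length_iff.mpr h0L
      rcases Nat.eq_zero_or_pos (L.idxOf 0) with h | h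
      · exact h
      · have hrel := hLs.rel_get_of_lt (a := ⟨0, hlenpos⟩) (b := ⟨_, hi⟩) h
        rw [List.idxOf_get] at hrel
        rw [List.get_eq_getElem] at hrel
        have hget0 : L[0] = 0 := Nat.le_zero.mp hrel
        have := List.Nodup.idxOf_getElem hLn 0 hlenpos
        rw [hget0] at this
        omega
    have hMcard : 1 ≤ M.card := Finset.card_pos.mpr ⟨0, h0M⟩
    -- the projected colouring
    have hproj_pos : ∀ t ∈ forestVerts s F',
        (projColouring s F' c).1 t = L.idxOf (c t) := by
      intro t ht
      simp only [projColouring, if_pos, ht, if_true]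
      rfl
    have hproj_neg : ∀ t ∉ forestVerts s F', (projColouring s F' c).1 t = 0 := by
      intro t ht
      simp only [projColouring, ht, if_false]
    have hproj2 : (projColouring s F' c).2 = M.card - 1 := rfl
    have hidx_lt : ∀ t ∈ forestVerts s F', L.idxOf (c t) < M.card := by
      intro t ht
      rw [← hlenL]
      exact List.idxOf_lt_length_iff.mpr ((hmemL _).mpr (hmemM t ht))
    have hgf' : IsGapFreeColouring s F' (projColouring s F' c).1
        (projColouring s F' c).2 := by
      refine ⟨?_, ?_, ?_, ?_, ?_⟩
      · intro t ht
        rw [hproj_pos t ht, hproj2]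
        have := hidx_lt t ht
        omega
      · intro j hj
        rw [hproj2] at hj
        have hjlen : j < L.length := by rw [hlenL]; omega
        have hjM : L.get ⟨j, hjlen⟩ ∈ M := (hmemL _).mp (L.get_mem _)
        obtain ⟨t, ht, hct⟩ := Finset.mem_image.mp hjM
        refine ⟨t, ht, ?_⟩
        rw [hproj_pos t ht, hct, List.get_eq_getElem]
        exact List.Nodup.idxOf_getElem hLn j hjlen
      · intro x hx
        have hxv : ({x} : Finset ι) ∈ forestVerts s F' := singleton_mem_forestVerts hx
        rw [hproj_pos _ hxv, hgf.2.2.1 x (Finset.mem_univ x), hidx0]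
      · rintro t u ⟨htv, huv, htu, hbet⟩
        -- transfer the child relation to the big forest
        have hus : u ⊆ s := by
          rcases Finset.mem_union.mp huv with h | h
          · exact (Finset.mem_filter.mp h).2
          · obtain ⟨y, hy, rfl⟩ := Finset.mem_image.mp h
            exact Finset.singleton_subset_iff.mpr hy
        have hchildBig : IsChildV Finset.univ F t u := by
          refine ⟨hV' htv, hV' huv, htu, ?_⟩
          rintro v hv ⟨h1, h2⟩
          have hvs : v ⊆ s := h2.subset.trans hus
          have hv' : v ∈ forestVerts s F' := by
            rcases Finset.mem_union.mp hv with h | h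
            · exact Finset.mem_union_left _ (Finset.mem_filter.mpr ⟨h, hvs⟩)
            · obtain ⟨y, -, rfl⟩ := Finset.mem_image.mp h
              exact singleton_mem_forestVerts (hvs (Finset.mem_singleton_self y))
          exact hbet v hv' ⟨h1, h2⟩
        have hlt : c t < c u := hgf.2.2.2.1 t u hchildBig
        rw [hproj_pos t htv, hproj_pos u huv]
        exact indexOf_lt_indexOf_of_sorted hLs hLn ((hmemL _).mpr (hmemM t htv))
          ((hmemL _).mpr (hmemM u huv)) hlt
      · intro t ht
        exact hproj_neg t ht
    exact ⟨hgf', gapfree_weaklyMixing part s F' hred' hmix' _ _ hgf'⟩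

end Statements
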